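/- Let u_1,…,u_n ∈ ℝ^d and let W be a random vector distributed according to the empirical measure n^{−1}Σ_{i=1}^n δ_{u_i}. Then for all t ∈ ℝ^d: 1 − |E[e^{i t'W}]|² ≥ (2/(π² n²)) Σ_{i≠j} ξ(u_i,u_j;t), where ξ(u,v;t) = inf_{q∈ℤ}(t'(u−v)−2πq)² and the sum runs over all ordered pairs (i,j) with i ≠ j. -/

import Mathlib

open MeasureTheory ProbabilityTheory Real
open scoped BigOperators ENNReal NNReal

noncomputable section

/-- Euclidean space ℝ^d. -/
abbrev Ed (d : ℕ) := EuclideanSpace ℝ (Fin d)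

variable {d : ℕ}

/-- The characteristic function of a (Borel) measure on ℝ^d. -/
def charFn (μ : Measure (Ed d)) (t : Ed d) : ℂ :=
  ∫ x, Complex.exp (((inner ℝ t x : ℝ) : ℂ) * Complex.I) ∂μ

/-- Partial derivative in the k-th coordinate direction. -/
def partialD {F : Type*} [NormedAddCommGroup F] [NormedSpace ℝ F]
    (k : Fin d) (f : Ed d → F) : Ed d → F :=
  fun x => fderiv ℝ f x (EuclideanSpace.single k 1)

/-- Iterated partial derivative `D^ν` for a multi-index ν. -/
def mDeriv {F : Type*} [NormedAddCommGroup F] [NormedSpace ℝ F]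
    (ν : Fin d → ℕ) (f : Ed d → F) : Ed d → F :=
  (List.finRange d).foldr (fun k g => (partialD k)^[ν k] g) f

/-- The ν-th cumulant of a measure μ on ℝ^d:
`κ_ν = (−i)^{|ν|} D^ν (log φ_μ)(0)` where φ_μ is the characteristic function. -/
def cumulant (μ : Measure (Ed d)) (ν : Fin d → ℕ) : ℂ :=
  (-Complex.I) ^ (∑ k, ν k) * mDeriv ν (fun t => Complex.log (charFn μ t)) 0

/-- The finite set of multi-indices ν ∈ ℤ₊^d with |ν| = j. -/
def multiIdx (d j : ℕ) : Finset (Fin d → ℕ) :=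
  (Fintype.piFinset fun _ : Fin d => Finset.range (j + 1)).filter fun ν => ∑ k, ν k = j

/-- The differential operator `χ̄_j(−D)` applied to f, where
`χ̄_j(z) = j! Σ_{|ν|=j} (χ_ν/ν!) z^ν`. -/
def chiOpApply (χ : (Fin d → ℕ) → ℂ) (j : ℕ) (f : Ed d → ℂ) : Ed d → ℂ :=
  fun x => (j.factorial : ℂ) * (-1 : ℂ) ^ j *
    ∑ ν ∈ multiIdx d j, (χ ν / ∏ k, ((ν k).factorial : ℂ)) * mDeriv ν f x

/-- The Edgeworth polynomial operator `P̃_j(−D; {χ_ν})` applied to f: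
`P̃_j = Σ_{m=1}^{j} (1/m!) Σ*_{j_1+⋯+j_m=j} ∏_k χ̄_{j_k+2}(−D)/(j_k+2)!`,
encoded as a sum over compositions of j. -/
def edgeworthOp (χ : (Fin d → ℕ) → ℂ) (j : ℕ) (f : Ed d → ℂ) : Ed d → ℂ :=
  fun x => ∑ c : Composition j, ((c.length.factorial : ℂ))⁻¹ *
    (c.blocks.foldr
      (fun jk g => fun y => (((jk + 2).factorial : ℂ))⁻¹ * chiOpApply χ (jk + 2) g y) f) x

/-- The standard normal density on ℝ^d. -/
def gaussDensity (d : ℕ) (x : Ed d) : ℝ :=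
  (2 * π) ^ (-(d : ℝ) / 2) * Real.exp (-‖x‖ ^ 2 / 2)

/-- The density of the order-s Edgeworth signed measure
`Σ_{j=0}^{s−2} n^{−j/2} P̃_j(−D;{χ_ν}) φ(x)`. -/
def edgeworthDensity (χ : (Fin d → ℕ) → ℂ) (n s : ℕ) (x : Ed d) : ℝ :=
  (∑ j ∈ Finset.range (s - 1), (((n : ℝ) ^ (-(j : ℝ) / 2) : ℝ) : ℂ) *
    edgeworthOp χ j (fun y => ((gaussDensity d y : ℝ) : ℂ)) x).re

/-- The order-s Edgeworth signed measure, as a set function `A ↦ ∫_A (density)`. -/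
def edgeworthSM (χ : (Fin d → ℕ) → ℂ) (n s : ℕ) (A : Set (Ed d)) : ℝ :=
  ∫ x in A, edgeworthDensity χ n s x

/-- The standard normal distribution Φ = N(0, I_d) on ℝ^d. -/
def stdGaussian (d : ℕ) : Measure (Ed d) :=
  volume.withDensity fun x => ENNReal.ofReal (gaussDensity d x)

/-- Modulus of continuity `ω_f(x;ε) = sup {|f z − f y| : z,y ∈ B(x;ε)}`. -/
def oscil (f : Ed d → ℝ) (x : Ed d) (ε : ℝ) : ℝ :=
  sSup {r | ∃ z ∈ Metric.ball x ε, ∃ y ∈ Metric.ball x ε, r = |f z - f y|}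

/-- Averaged modulus of continuity `ω̄_f(ε;μ) = ∫ ω_f(x;ε) dμ(x)`. -/
def oscilBar (f : Ed d → ℝ) (ε : ℝ) (μ : Measure (Ed d)) : ℝ :=
  ∫ x, oscil f x ε ∂μ

/-- `M_s(f) = sup_x |f(x)|/(1+‖x‖^s)`. -/
def Msup (s : ℕ) (f : Ed d → ℝ) : ℝ := ⨆ x : Ed d, |f x| / (1 + ‖x‖ ^ s)

/-- The (uncentered) second-moment matrix `E[X X']` of a measure on ℝ^d. -/
def covMat (μ : Measure (Ed d)) : Matrix (Fin d) (Fin d) ℝ :=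
  Matrix.of fun k l => ∫ x, x k * x l ∂μ

open Classical in
/-- Inverse square root of a matrix (junk value if not positive semidefinite). -/
def matInvSqrt (M : Matrix (Fin d) (Fin d) ℝ) : Matrix (Fin d) (Fin d) ℝ :=
  if h : M.PosSemidef then (h.1.eigenvectorUnitary.1 * Matrix.diagonal (Real.sqrt ∘ h.1.eigenvalues) *
    (star h.1.eigenvectorUnitary : Matrix (Fin d) (Fin d) ℝ))⁻¹ else 1

open Classical in
/-- Square root of a matrix (junk value if not positive semidefinite). -/
def matSqrt (M : Matrix (Fin d) (Fin d) ℝ) : Matrix (Fin d) (Fin d) ℝ :=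
  if h : M.PosSemidef then (h.1.eigenvectorUnitary.1 * Matrix.diagonal (Real.sqrt ∘ h.1.eigenvalues) *
    (star h.1.eigenvectorUnitary : Matrix (Fin d) (Fin d) ℝ)) else 1

/-- Matrix-vector multiplication on Euclidean space. -/
def mulVecE (M : Matrix (Fin d) (Fin d) ℝ) (x : Ed d) : Ed d :=
  (EuclideanSpace.equiv (Fin d) ℝ).symm (M.mulVec (EuclideanSpace.equiv (Fin d) ℝ x))

/-- Marginal distribution of the i-th coordinate. -/
def marginal {n : ℕ} (P : Measure (Fin n → Ed d)) (i : Fin n) : Measure (Ed d) :=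
  P.map fun ω => ω i

/-- `V_{n,P} = (1/n) Σ_i Var_P(X_{i,n})` (for mean-zero coordinates). -/
def Vmat {d : ℕ} (n : ℕ) (P : Measure (Fin n → Ed d)) : Matrix (Fin d) (Fin d) ℝ :=
  (n : ℝ)⁻¹ • ∑ i : Fin n, covMat (marginal P i)

/-- `Q_{n,P}`, the distribution of `n^{−1/2} Σ_i V_{n,P}^{−1/2} X_{i,n}`. -/
def Qmeas {d : ℕ} (n : ℕ) (P : Measure (Fin n → Ed d)) : Measure (Ed d) :=
  P.map fun ω => (Real.sqrt n)⁻¹ • ∑ i, mulVecE (matInvSqrt (Vmat n P)) (ω i)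

/-- `χ̄_{ν,P}`, the average over i of the ν-th cumulant of `V_{n,P}^{−1/2} X_{i,n}`. -/
def chiBar {d : ℕ} (n : ℕ) (P : Measure (Fin n → Ed d)) (ν : Fin d → ℕ) : ℂ :=
  (n : ℂ)⁻¹ * ∑ i : Fin n, cumulant ((marginal P i).map (mulVecE (matInvSqrt (Vmat n P)))) ν

/-- `ρ_{n,s,P} = (1/n) Σ_i E_P ‖X_{i,n}‖^s`. -/
def rhoM {d : ℕ} (n s : ℕ) (P : Measure (Fin n → Ed d)) : ℝ :=
  (n : ℝ)⁻¹ * ∑ i : Fin n, ∫ ω, ‖ω i‖ ^ s ∂P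

/-- The mean weak Cramér condition with parameter (b,c,R) for a collection of
joint distributions of (X_{i,n})_{i=1}^n. -/
def meanWeakCramer {d : ℕ} {n : ℕ} (Ps : Set (Measure (Fin n → Ed d))) (b c R : ℝ) : Prop :=
  ∀ P ∈ Ps, ∀ t : Ed d, R < ‖t‖ →
    (n : ℝ)⁻¹ * ∑ i : Fin n, ‖charFn (marginal P i) t‖ ≤ 1 - c / ‖t‖ ^ b

/-- The weak Cramér condition with parameter (b,c,R) for a single distribution. -/
def weakCramerMeas (μ : Measure (Ed d)) (b c R : ℝ) : Prop :=
  ∀ t : Ed d, R < ‖t‖ → ‖charFn μ t‖ ≤ 1 - c / ‖t‖ ^ b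

/-- The empirical (resampling) measure `(1/n) Σ_j δ_{x_j}`. -/
def empMeas {d n : ℕ} (x : Fin n → Ed d) : Measure (Ed d) :=
  ((n : ℝ≥0∞))⁻¹ • ∑ i : Fin n, Measure.dirac (x i)

/-- Sample mean. -/
def sMean {d n : ℕ} (x : Fin n → Ed d) : Ed d := (n : ℝ)⁻¹ • ∑ i, x i

/-- Sample covariance matrix `V̂_n`. -/
def Vhat {d n : ℕ} (x : Fin n → Ed d) : Matrix (Fin d) (Fin d) ℝ :=
  (n : ℝ)⁻¹ • ∑ i : Fin n, Matrix.of fun k l => (x i k - sMean x k) * (x i l - sMean x l)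

/-- The bootstrap distribution `Q_{n,ℱ_n}`: the conditional distribution, given the
sample x, of `√n V̂_n^{−1/2}(X̄* − X̄)` where `X̄*` is the mean of n i.i.d. draws from
the empirical measure of x. -/
def bootQ {d n : ℕ} (x : Fin n → Ed d) : Measure (Ed d) :=
  (Measure.pi fun _ : Fin n => empMeas x).map
    fun y => Real.sqrt n • mulVecE (matInvSqrt (Vhat x)) (sMean y - sMean x)

/-- `χ*_ν`, the ν-th cumulant of the conditional distribution of a bootstrap draw
given the sample, i.e. of the empirical measure. -/
def bootChi {d n : ℕ} (x : Fin n → Ed d) (ν : Fin d → ℕ) : ℂ := cumulant (empMeas x) ν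

/-- `Q̃_{n,ℱ_n}`, the Edgeworth signed measure built from the bootstrap cumulants. -/
def bootQtilde {d n : ℕ} (s : ℕ) (x : Fin n → Ed d) (A : Set (Ed d)) : ℝ :=
  edgeworthSM (bootChi x) n s A

/-- Event `ℰ_{n,0}(ρ̄) = {(1/n) Σ ‖X_i‖^s ≤ ρ̄}`. -/
def Ev0 {d : ℕ} (n s : ℕ) (ρ : ℝ) : Set (Fin n → Ed d) :=
  {x | (n : ℝ)⁻¹ * ∑ i, ‖x i‖ ^ s ≤ ρ}

/-- Event `ℰ_{n,1}(c₁) = {smallest eigenvalue of V̂_n ≥ c₁}` (via the quadratic form). -/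
def Ev1 {d : ℕ} (n : ℕ) (c₁ : ℝ) : Set (Fin n → Ed d) :=
  {x | ∀ v : Ed d, c₁ * ‖v‖ ^ 2 ≤ (inner ℝ v (mulVecE (Vhat x) v) : ℝ)}

/-- Event `ℰ_{n,2}(c₂)`: all mixed absolute moments of the sample of order ≤ s are ≤ c₂. -/
def Ev2 {d : ℕ} (n s : ℕ) (c₂ : ℝ) : Set (Fin n → Ed d) :=
  {x | ∀ v : Fin d → ℕ, (∑ k, v k) ≤ s → (n : ℝ)⁻¹ * ∑ i, ∏ k, |x i k| ^ (v k) ≤ c₂}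

/-- `ξ(u,v;t) = inf_{q∈ℤ} (t'(u−v) − 2πq)²`. -/
def xiFn {d : ℕ} (t u v : Ed d) : ℝ := ⨅ q : ℤ, ((inner ℝ t (u - v) : ℝ) - 2 * π * (q : ℝ)) ^ 2

/-- Condition (★): `c_R ≤ sup_{‖t‖>R} (1/(2π²)) E_P[inf_q (t'(X₁−X₂) − 2πq)²]`
for X₁, X₂ i.i.d. with distribution P. -/
def condStar {d : ℕ} (P : Measure (Ed d)) (R cR : ℝ) : Prop :=
  cR ≤ ⨆ t : {t : Ed d // R < ‖t‖},
    (2 * π ^ 2)⁻¹ * ∫ p : Ed d × Ed d, xiFn t.1 p.1 p.2 ∂(P.prod P)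

/-!
With `θᵢ = t'uᵢ`, expanding the square gives `|Σᵢ e^{iθᵢ}|² = Σᵢⱼ cos (θᵢ - θⱼ)`, so
`1 - |E e^{it'W}|² = n⁻² Σᵢⱼ (1 - cos (θᵢ - θⱼ))`. Each term is bounded below by Jordan's
inequality `1 - cos y ≥ 2y²/π²` on `[-π, π]`, applied to the representative of `θᵢ - θⱼ`
modulo `2π` nearest to `0`, whose square is at least `ξ(uᵢ, uⱼ; t)`.
-/
lemma two_div_pi_sq_mul_iInf_sq_sub_le_one_sub_cos (x : ℝ) :
    2 / π ^ 2 * ⨅ q : ℤ, (x - 2 * π * q) ^ 2 ≤ 1 - cos x := by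
  set q₀ : ℤ := round (x / (2 * π))
  have h_near : |x - 2 * π * q₀| ≤ π := by
    have h_round : |x / (2 * π) - q₀| ≤ 1 / 2 := abs_sub_round _
    rw [show x - 2 * π * q₀ = 2 * π * (x / (2 * π) - q₀) by field_simp, abs_mul,
      abs_of_pos two_pi_pos]
    nlinarith [pi_pos]
  have h_cos : cos x = cos (x - 2 * π * q₀) := by
    simpa [mul_comm] using (cos_sub_int_mul_two_pi x q₀).symm
  calc 2 / π ^ 2 * ⨅ q : ℤ, (x - 2 * π * q) ^ 2 ≤ 2 / π ^ 2 * (x - 2 * π * q₀) ^ 2 := by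
        gcongr
        exact ciInf_le ⟨0, by rintro _ ⟨q, rfl⟩; positivity⟩ q₀
    _ ≤ 1 - cos x := by linarith [cos_le_one_sub_mul_cos_sq h_near]

open Complex in
lemma norm_sum_exp_ofReal_mul_I_sq {ι : Type*} (s : Finset ι) (θ : ι → ℝ) :
    ‖∑ i ∈ s, exp (θ i * I)‖ ^ 2 = ∑ i ∈ s, ∑ j ∈ s, Real.cos (θ i - θ j) := by
  simp only [Complex.sq_norm, normSq_apply, re_sum, im_sum, exp_ofReal_mul_I_re,
    exp_ofReal_mul_I_im, Real.cos_sub, Finset.sum_add_distrib, Finset.sum_mul_sum]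

open Complex in
lemma one_sub_norm_average_exp_ofReal_mul_I_sq {ι : Type*} {s : Finset ι} (hs : s.Nonempty)
    (θ : ι → ℝ) :
    1 - ‖(s.card : ℂ)⁻¹ * ∑ i ∈ s, exp (θ i * I)‖ ^ 2 =
      ((s.card : ℝ) ^ 2)⁻¹ * ∑ i ∈ s, ∑ j ∈ s, (1 - Real.cos (θ i - θ j)) := by
  have h_card : (s.card : ℝ) ≠ 0 := by exact_mod_cast hs.card_pos.ne'
  simp only [norm_mul, norm_inv, Complex.norm_natCast, mul_pow, norm_sum_exp_ofReal_mul_I_sq,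
    Finset.sum_sub_distrib, Finset.sum_const, nsmul_eq_mul, mul_one]
  field_simp

theorem one_sub_sq_abs_empirical_charFun_ge_general
    (d : ℕ) (n : ℕ) (hn : 1 ≤ n) (u : Fin n → Ed d) (t : Ed d) :
    1 - (‖(n : ℂ)⁻¹ *
          ∑ i : Fin n, Complex.exp (((inner ℝ t (u i) : ℝ) : ℂ) * Complex.I)‖) ^ 2 ≥
      2 / (π ^ 2 * (n : ℝ) ^ 2) *
        ∑ p ∈ Finset.univ.filter fun p : Fin n × Fin n => p.1 ≠ p.2,
          xiFn t (u p.1) (u p.2) := by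
  set θ : Fin n → ℝ := fun i => inner ℝ t (u i)
  have h_xi (p : Fin n × Fin n) : 2 / π ^ 2 * xiFn t (u p.1) (u p.2) ≤ 1 - cos (θ p.1 - θ p.2) := by
    simpa [xiFn, inner_sub_right] using two_div_pi_sq_mul_iInf_sq_sub_le_one_sub_cos (θ p.1 - θ p.2)
  have h_avg := one_sub_norm_average_exp_ofReal_mul_I_sq
    (Finset.univ_nonempty_iff.mpr (Fin.pos_iff_nonempty.mp hn)) θ
  simp only [Finset.card_univ, Fintype.card_fin] at h_avg
  have h_pairs : 2 / π ^ 2 * ∑ p ∈ Finset.univ.filter (fun p : Fin n × Fin n => p.1 ≠ p.2),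
      xiFn t (u p.1) (u p.2) ≤ ∑ p : Fin n × Fin n, (1 - cos (θ p.1 - θ p.2)) := by
    rw [Finset.mul_sum]
    exact (Finset.sum_le_sum fun p _ => h_xi p).trans <|
      Finset.sum_le_sum_of_subset_of_nonneg (Finset.subset_univ _)
        fun p _ _ => sub_nonneg.mpr (cos_le_one _)
  rw [ge_iff_le, h_avg, ← Fintype.sum_prod_type',
    show 2 / (π ^ 2 * (n : ℝ) ^ 2) = ((n : ℝ) ^ 2)⁻¹ * (2 / π ^ 2) by ring, mul_assoc]
  gcongr

/-- **Inequality from the proof of Proposition 3.1 (after Lemma 5.1 of Angst–Poly).**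
For the empirical measure of `u_1,…,u_n`,
`1 − |E e^{i t'W}|² ≥ (2/(π² n²)) Σ_{i≠j} ξ(u_i,u_j;t)` for all t. -/
theorem one_sub_sq_abs_empirical_charFun_ge
    (d : ℕ) (hd : 1 ≤ d) (n : ℕ) (hn : 1 ≤ n) (u : Fin n → Ed d) (t : Ed d) :
    1 - (‖(n : ℂ)⁻¹ *
          ∑ i : Fin n, Complex.exp (((inner ℝ t (u i) : ℝ) : ℂ) * Complex.I)‖) ^ 2 ≥
      2 / (π ^ 2 * (n : ℝ) ^ 2) *
        ∑ p ∈ Finset.univ.filter fun p : Fin n × Fin n => p.1 ≠ p.2,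
          xiFn t (u p.1) (u p.2) :=
  one_sub_sq_abs_empirical_charFun_ge_general d n hn u t
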